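/- For every integer n ≥ 2, every j ∈ {0, 1, …, 2n−1}, and every t ∈ ℝ, the quadrature weight V_j^{(n)}(t) equals the integral of the weakly singular kernel against the trigonometric Lagrange basis function: ∫₀^{2π} ln(4 sin²((t−ζ)/2)) sin(t−ζ) 𝔏_j(ζ) dζ = V_j^{(n)}(t). -/

import Mathlib

open MeasureTheory intervalIntegral

/-- The collocation points ζ_j^{(n)} = πj/n. -/
noncomputable def zetaPt (n j : ℕ) : ℝ := Real.pi * j / n

/-- The trigonometric Lagrange basis function 𝔏_j. -/
noncomputable def lagrangeBasis (n j : ℕ) (t : ℝ) : ℝ :=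
  (1 / (2 * (n : ℝ))) *
    (1 + 2 * ∑ k ∈ Finset.Icc 1 (n - 1), Real.cos ((k : ℝ) * (t - zetaPt n j))
      + Real.cos ((n : ℝ) * (t - zetaPt n j)))

/-- The quadrature weight V_j^{(n)}(t). -/
noncomputable def Vweight (n j : ℕ) (t : ℝ) : ℝ :=
  -(Real.pi / (2 * (n : ℝ))) * Real.sin (zetaPt n j - t)
    + (2 * Real.pi / (n : ℝ)) *
        ∑ m ∈ Finset.Icc 2 (n - 1), Real.sin ((m : ℝ) * (zetaPt n j - t)) / ((m : ℝ) ^ 2 - 1)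
    + (Real.pi / ((n : ℝ) * ((n : ℝ) ^ 2 - 1))) * Real.sin ((n : ℝ) * (zetaPt n j - t))

open Real Set Filter Topology

noncomputable def Lf (τ : ℝ) : ℝ := Real.log (4 * Real.sin (τ/2) ^ 2)

lemma Lf_eq (τ : ℝ) : Lf τ = 2 * Real.log (2 * Real.sin (τ/2)) := by
  have : (4:ℝ) * Real.sin (τ/2) ^ 2 = (2 * Real.sin (τ/2)) ^ 2 := by ring
  rw [Lf, this, Real.log_pow]
  norm_num

lemma Lf_symm (τ : ℝ) : Lf (2*Real.pi - τ) = Lf τ := by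
  have : Real.sin ((2*Real.pi - τ)/2) = Real.sin (τ/2) := by
    have : (2*Real.pi - τ)/2 = Real.pi - τ/2 := by ring
    rw [this, Real.sin_pi_sub]
  rw [Lf, Lf, this]

lemma Lf_periodic : Function.Periodic Lf (2*Real.pi) := by
  intro τ
  have : (τ + 2*Real.pi)/2 = τ/2 + Real.pi := by ring
  rw [Lf, Lf, this, Real.sin_add_pi]
  ring_nf

lemma II_log01 : IntervalIntegrable Real.log volume 0 1 := by
  have h : IntervalIntegrable (fun x => -Real.log x) volume 0 1 := by
    apply intervalIntegrable_deriv_of_nonneg (g := fun x => x - x * Real.log x)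
    · have h1 : Continuous fun x : ℝ => x := continuous_id
      have h2 := Real.continuous_mul_log
      exact (h1.sub h2).continuousOn
    · intro x hx
      simp only [min_def, max_def] at hx
      norm_num at hx
      have : HasDerivAt (fun x : ℝ => x - x * Real.log x) (1 - (Real.log x + 1)) x := by
        exact (hasDerivAt_id x).sub ((Real.hasDerivAt_mul_log (ne_of_gt hx.1)))
      convert this using 1; ring
    · intro x hx
      simp only [min_def, max_def] at hx
      norm_num at hx
      have := Real.log_nonpos (le_of_lt hx.1) (le_of_lt hx.2)
      linarith
  have h2 := h.neg
  have : Real.log = fun x : ℝ => -(-Real.log x) := by funext x; ring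
  rw [this]
  exact h2

lemma II_logpi : IntervalIntegrable Real.log volume 0 Real.pi := by
  apply II_log01.trans
  apply ContinuousOn.intervalIntegrable
  apply Real.continuousOn_log.mono
  intro x hx
  simp only [uIcc_of_le (by linarith [Real.pi_gt_three] : (1:ℝ) ≤ Real.pi)] at hx
  simp only [mem_compl_iff, mem_singleton_iff]
  intro h; rw [h] at hx; exact absurd hx.1 (by norm_num)

lemma Lf_meas : Measurable Lf := by
  unfold Lf; measurability

lemma Lf_bound {τ : ℝ} (h1 : 0 < τ) (h2 : τ ≤ Real.pi) :
    ‖Lf τ‖ ≤ 2 * |Real.log τ| + 2 * Real.log (Real.pi/2) := by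
  have hs1 : τ / Real.pi ≤ Real.sin (τ/2) := by
    simpa using Real.mul_le_sin (x := τ/2) (by positivity) (by linarith)
  have hs2 : Real.sin (τ/2) ≤ τ/2 := Real.sin_le (by positivity)
  have hp : (0:ℝ) < Real.pi := Real.pi_pos
  have h2pos : (0:ℝ) < 2*τ/Real.pi := by positivity
  have hs1' : 2*τ/Real.pi ≤ 2 * Real.sin (τ/2) := by
    rw [show 2*τ/Real.pi = 2*(τ/Real.pi) by ring]; linarith
  have hspos : 0 < Real.sin (τ/2) := lt_of_lt_of_le (by positivity) hs1
  have hlow : Real.log (2*τ/Real.pi) ≤ Real.log (2 * Real.sin (τ/2)) :=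
    Real.log_le_log h2pos hs1'
  have hup : Real.log (2 * Real.sin (τ/2)) ≤ Real.log τ :=
    Real.log_le_log (by linarith) (by linarith)
  have hlow' : Real.log (2*τ/Real.pi) = Real.log τ - Real.log (Real.pi/2) := by
    rw [show 2*τ/Real.pi = τ / (Real.pi/2) by ring, Real.log_div (ne_of_gt h1) (by positivity)]
  have hpi2 : 0 ≤ Real.log (Real.pi/2) := Real.log_nonneg (by nlinarith [Real.pi_gt_three])
  rw [Lf_eq, Real.norm_eq_abs, abs_mul]
  have : |Real.log (2 * Real.sin (τ/2))| ≤ |Real.log τ| + Real.log (Real.pi/2) := by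
    rw [abs_le]
    constructor
    · have := neg_abs_le (Real.log τ); linarith
    · have := le_abs_self (Real.log τ); linarith
  calc |(2:ℝ)| * |Real.log (2 * Real.sin (τ/2))| = 2 * |Real.log (2 * Real.sin (τ/2))| := by
        norm_num
    _ ≤ 2 * (|Real.log τ| + Real.log (Real.pi/2)) := by linarith
    _ = 2 * |Real.log τ| + 2 * Real.log (Real.pi/2) := by ring

lemma II_Lf_pi : IntervalIntegrable Lf volume 0 Real.pi := by
  rw [intervalIntegrable_iff_integrableOn_Ioc_of_le Real.pi_pos.le]
  have hg : IntegrableOn (fun τ => 2 * |Real.log τ| + 2 * Real.log (Real.pi/2)) (Ioc 0 Real.pi) := by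
    apply Integrable.add
    · exact (II_logpi.abs.const_mul 2).1.congr_fun (fun x _ => rfl) measurableSet_Ioc |>.congr
        (Filter.EventuallyEq.refl _ _)
    · exact (integrableOn_const_iff).mpr (Or.inr (by rw [Real.volume_Ioc]; exact ENNReal.ofReal_lt_top))
  apply Integrable.mono' hg (Lf_meas.aestronglyMeasurable.restrict)
  rw [ae_restrict_iff' measurableSet_Ioc]
  filter_upwards with τ hτ
  exact Lf_bound hτ.1 hτ.2

lemma II_Lf : IntervalIntegrable Lf volume 0 (2*Real.pi) := by
  apply II_Lf_pi.trans
  have h := II_Lf_pi.comp_sub_left (2*Real.pi)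
  simp only [sub_zero] at h
  have h2 : (fun x => Lf (2*Real.pi - x)) = Lf := funext Lf_symm
  rw [h2] at h
  have : 2*Real.pi - Real.pi = Real.pi := by ring
  rw [this] at h
  exact h.symm

lemma tendsto_sin_div : Tendsto (fun τ : ℝ => Real.sin τ / τ) (𝓝[≠] 0) (𝓝 1) := by
  have h := (Real.hasDerivAt_sin 0)
  rw [hasDerivAt_iff_tendsto_slope] at h
  simp only [Real.cos_zero] at h
  convert h using 2 with τ
  simp [slope_def_field, Real.sin_zero]

lemma tendsto_sinm_div (m : ℝ) :
    Tendsto (fun τ : ℝ => Real.sin (m*τ) / τ) (𝓝[≠] 0) (𝓝 m) := by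
  have h : HasDerivAt (fun τ : ℝ => Real.sin (m*τ)) (m * 1) 0 := by
    have := (Real.hasDerivAt_sin (m*0)).comp 0 ((hasDerivAt_id 0).const_mul m)
    simpa [mul_comm, Function.comp_def] using this
  rw [hasDerivAt_iff_tendsto_slope] at h
  simp only [mul_one] at h
  convert h using 2 with τ
  simp [slope_def_field]

-- key limit at 0
lemma KL0 (m : ℝ) :
    Tendsto (fun τ => Lf τ * Real.sin (m*τ)) (𝓝[>] (0:ℝ)) (𝓝 0) := by
  have hsub : 𝓝[>] (0:ℝ) ≤ 𝓝[≠] (0:ℝ) := nhdsWithin_mono _ (fun x hx => ne_of_gt hx)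
  -- part 1 : 2 * log (2 sin(τ/2) / τ) * sin (m τ) → 2 * log 1 * 0 = 0
  have hratio : Tendsto (fun τ : ℝ => 2 * Real.sin (τ/2) / τ) (𝓝[>] 0) (𝓝 1) := by
    have hmap : Tendsto (fun τ : ℝ => τ/2) (𝓝[>] (0:ℝ)) (𝓝[≠] (0:ℝ)) := by
      apply Tendsto.mono_right _ (nhdsWithin_mono _ (fun x hx => ne_of_gt hx))
      apply tendsto_nhdsWithin_of_tendsto_nhds_of_eventually_within
      · simpa using (tendsto_id (x := 𝓝[>] (0:ℝ))).mono_right nhdsWithin_le_nhds |>.div_const 2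
      · filter_upwards [self_mem_nhdsWithin] with x hx
        exact half_pos (Set.mem_Ioi.mp hx)
    have := tendsto_sin_div.comp hmap
    convert this using 2 with τ
    simp only [Function.comp_apply]
    ring
  have h1 : Tendsto (fun τ : ℝ => 2 * Real.log (2 * Real.sin (τ/2) / τ) * Real.sin (m*τ))
      (𝓝[>] 0) (𝓝 0) := by
    have hlog : Tendsto (fun τ : ℝ => Real.log (2 * Real.sin (τ/2) / τ)) (𝓝[>] 0) (𝓝 0) := by
      have := (Real.continuousAt_log (by norm_num : (1:ℝ) ≠ 0)).tendsto
      rw [Real.log_one] at this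
      exact this.comp hratio
    have hsin : Tendsto (fun τ : ℝ => Real.sin (m*τ)) (𝓝[>] 0) (𝓝 0) := by
      have : Continuous (fun τ : ℝ => Real.sin (m*τ)) := by continuity
      have := this.tendsto 0
      simpa using this.mono_left nhdsWithin_le_nhds
    have := (hlog.const_mul 2).mul hsin
    simpa using this
  -- part 2 : 2 * log τ * sin (m τ) = 2 * (log τ * τ) * (sin mτ / τ) → 0
  have h2 : Tendsto (fun τ : ℝ => 2 * Real.log τ * Real.sin (m*τ)) (𝓝[>] 0) (𝓝 0) := by
    have ha : Tendsto (fun τ : ℝ => Real.log τ * τ) (𝓝[>] 0) (𝓝 0) := by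
      have := tendsto_log_mul_rpow_nhdsGT_zero (r := 1) one_pos
      convert this using 2 with τ
      rw [Real.rpow_one]
    have hb := (tendsto_sinm_div m).mono_left hsub
    have := (ha.mul hb).const_mul 2
    simp only [mul_zero, zero_mul] at this
    apply this.congr'
    filter_upwards [self_mem_nhdsWithin] with τ hτ
    have hτ0 : τ ≠ 0 := ne_of_gt hτ
    field_simp
  -- combine
  have hcomb := h1.add h2
  simp only [add_zero] at hcomb
  apply hcomb.congr'
  filter_upwards [Ioo_mem_nhdsGT_of_mem (Set.left_mem_Ico.mpr Real.pi_pos)] with τ hτ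
  have hτ0 : τ ≠ 0 := ne_of_gt hτ.1
  have hspos : 0 < Real.sin (τ/2) :=
    Real.sin_pos_of_pos_of_lt_pi (by linarith [hτ.1]) (by linarith [hτ.2, Real.pi_pos])
  rw [Lf_eq, Real.log_div (by positivity) hτ0]
  ring

lemma KL2pi (m : ℕ) :
    Tendsto (fun τ => Lf τ * Real.sin (m*τ)) (𝓝[<] (2*Real.pi)) (𝓝 0) := by
  have hk : Tendsto (fun τ : ℝ => 2*Real.pi - τ) (𝓝[<] (2*Real.pi)) (𝓝[>] (0:ℝ)) := by
    apply tendsto_nhdsWithin_of_tendsto_nhds_of_eventually_within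
    · have : Continuous (fun τ : ℝ => 2*Real.pi - τ) := by continuity
      have h := (this.tendsto (2*Real.pi)).mono_left (nhdsWithin_le_nhds (s := Iio (2*Real.pi)))
      simpa using h
    · filter_upwards [self_mem_nhdsWithin] with x hx
      simp only [mem_Iio] at hx
      simp only [mem_Ioi]
      linarith
  have h := ((KL0 m).comp hk).neg
  simp only [neg_zero] at h
  apply h.congr
  intro τ
  simp only [Function.comp_apply, Lf_symm]
  rw [show (m:ℝ) * (2*Real.pi - τ) = (m:ℝ)*(2*Real.pi) - m*τ by ring,
    Real.sin_nat_mul_two_pi_sub]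
  ring

lemma cont_sinm (c : ℝ) : Continuous fun τ : ℝ => Real.sin (c*τ) :=
  Real.continuous_sin.comp (continuous_const.mul continuous_id)

lemma cont_cosm (c : ℝ) : Continuous fun τ : ℝ => Real.cos (c*τ) :=
  Real.continuous_cos.comp (continuous_const.mul continuous_id)

lemma hasDerivAt_sinm (c : ℝ) (τ : ℝ) :
    HasDerivAt (fun τ : ℝ => Real.sin (c*τ)) (c * Real.cos (c*τ)) τ := by
  have h := (Real.hasDerivAt_sin (c*τ)).comp τ ((hasDerivAt_id τ).const_mul c)
  have h2 : HasDerivAt (fun y : ℝ => Real.sin (c*y)) (Real.cos (c*τ) * (c*1)) τ := by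
    simpa [Function.comp_def] using h
  convert h2 using 1
  ring

lemma trig_id (m : ℕ) (hm : 1 ≤ m) (τ : ℝ) :
    Real.sin (τ/2) * (1 + Real.cos (m*τ) + 2*∑ k ∈ Finset.Icc 1 (m-1), Real.cos (k*τ))
      = Real.cos (τ/2) * Real.sin (m*τ) := by
  induction m, hm using Nat.le_induction with
  | base =>
    simp only [Nat.cast_one, one_mul, Nat.sub_self, Finset.Icc_self, Finset.Icc_eq_empty_of_lt,
      show (1:ℕ)-1 = 0 by rfl]
    rw [show Finset.Icc 1 0 = ∅ by rfl]
    simp only [Finset.sum_empty, mul_zero, add_zero]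
    have hs := Real.sin_two_mul (τ/2)
    have hc := Real.cos_two_mul (τ/2)
    rw [show 2*(τ/2) = τ by ring] at hs hc
    rw [hs, hc]; ring
  | succ n hn ih =>
    obtain ⟨k, rfl⟩ := Nat.exists_eq_add_of_le hn
    have hred : (1 + k + 1) - 1 = 1 + k := by omega
    have hred2 : (1 + k) - 1 = k := by omega
    rw [hred]
    rw [hred2] at ih
    rw [show Finset.Icc 1 (1+k) = Finset.Icc 1 (k+1) by rw [add_comm],
      Finset.sum_Icc_succ_top (by omega : 1 ≤ k+1)]
    have key : Real.sin (τ/2) * (Real.cos ((1+k+1 : ℕ)*τ) + Real.cos ((k+1 : ℕ)*τ))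
        = Real.cos (τ/2) * (Real.sin ((1+k+1 : ℕ)*τ) - Real.sin ((1+k : ℕ)*τ)) := by
      rw [Real.cos_add_cos, Real.sin_sub_sin]
      push_cast
      ring_nf
    push_cast at key ih ⊢
    set S : ℝ := ∑ x ∈ Finset.Icc 1 k, Real.cos ((x:ℝ)*τ) with hS
    ring_nf at key ih ⊢
    linarith [key, ih]

lemma hasDerivAt_Lf {τ : ℝ} (h1 : 0 < τ) (h2 : τ < 2*Real.pi) :
    HasDerivAt Lf (Real.cos (τ/2) / Real.sin (τ/2)) τ := by
  have hs : 0 < Real.sin (τ/2) :=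
    Real.sin_pos_of_pos_of_lt_pi (by linarith) (by linarith)
  have hg : HasDerivAt (fun τ : ℝ => 4 * Real.sin (τ/2) ^ 2)
      (4 * (2 * Real.sin (τ/2) * (Real.cos (τ/2) * (1/2)))) τ := by
    have hhalf : HasDerivAt (fun τ : ℝ => τ/2) (1/2) τ := by
      simpa using (hasDerivAt_id τ).div_const 2
    have hsin : HasDerivAt (fun τ : ℝ => Real.sin (τ/2)) (Real.cos (τ/2) * (1/2)) τ :=
      by simpa [Function.comp_def] using (Real.hasDerivAt_sin (τ/2)).comp τ hhalf
    have := (hsin.pow 2).const_mul (4:ℝ)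
    refine this.congr_deriv ?_
    ring
  have hlog := hg.log (by positivity)
  refine hlog.congr_deriv ?_
  field_simp

lemma Jcos (m : ℕ) (hm : 1 ≤ m) :
    ∫ τ in (0:ℝ)..(2*Real.pi), Lf τ * Real.cos (m*τ) = -2*Real.pi/m := by
  have hm0 : (m:ℝ) ≠ 0 := Nat.cast_ne_zero.mpr (by omega)
  set F : ℝ → ℝ := fun τ => (1/m) * (Lf τ * Real.sin (m*τ))
      - (1/m) * (τ + Real.sin (m*τ)/m + 2*∑ k ∈ Finset.Icc 1 (m-1), Real.sin (k*τ)/k) with hF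
  have hderiv : ∀ τ ∈ Ioo (0:ℝ) (2*Real.pi), HasDerivAt F (Lf τ * Real.cos (m*τ)) τ := by
    intro τ hτ
    have hs : 0 < Real.sin (τ/2) :=
      Real.sin_pos_of_pos_of_lt_pi (by linarith [hτ.1]) (by linarith [hτ.2])
    have hsinm : ∀ c : ℕ, HasDerivAt (fun τ : ℝ => Real.sin (c*τ)) ((c:ℝ) * Real.cos (c*τ)) τ :=
      fun c => hasDerivAt_sinm (c:ℝ) τ
    have h1 : HasDerivAt (fun τ => (1/(m:ℝ)) * (Lf τ * Real.sin (m*τ)))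
        ((1/m) * ((Real.cos (τ/2) / Real.sin (τ/2)) * Real.sin (m*τ)
          + Lf τ * (m * Real.cos (m*τ)))) τ :=
      ((hasDerivAt_Lf hτ.1 hτ.2).mul (hsinm m)).const_mul _
    have h2 : HasDerivAt (fun τ : ℝ => τ + Real.sin (m*τ)/m
          + 2*∑ k ∈ Finset.Icc 1 (m-1), Real.sin (k*τ)/k)
        (1 + Real.cos (m*τ) + 2*∑ k ∈ Finset.Icc 1 (m-1), Real.cos (k*τ)) τ := by
      have hsum : HasDerivAt (fun τ : ℝ => ∑ k ∈ Finset.Icc 1 (m-1), Real.sin (k*τ)/k)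
          (∑ k ∈ Finset.Icc 1 (m-1), Real.cos (k*τ)) τ := by
        have : HasDerivAt (fun τ : ℝ => ∑ k ∈ Finset.Icc 1 (m-1), Real.sin (k*τ)/k)
            (∑ k ∈ Finset.Icc 1 (m-1), (k * Real.cos (k*τ))/k) τ :=
          HasDerivAt.fun_sum (fun k _ => ((hsinm k).div_const k))
        convert this using 1
        apply Finset.sum_congr rfl
        intro k hk
        have hk1 : 1 ≤ k := (Finset.mem_Icc.mp hk).1
        have : (k:ℝ) ≠ 0 := Nat.cast_ne_zero.mpr (by omega)
        field_simp
      have := ((hasDerivAt_id τ).add ((hsinm m).div_const m)).add (hsum.const_mul 2)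
      refine this.congr_deriv ?_
      field_simp
    have := h1.sub (h2.const_mul (1/(m:ℝ)))
    refine this.congr_deriv ?_
    have htrig := trig_id m hm τ
    have hcs : Real.cos (τ/2) / Real.sin (τ/2) * Real.sin (m*τ)
        = 1 + Real.cos (m*τ) + 2*∑ k ∈ Finset.Icc 1 (m-1), Real.cos (k*τ) := by
      rw [div_mul_eq_mul_div, div_eq_iff hs.ne']
      linarith [htrig]
    rw [hcs]
    field_simp
    ring
  have hint : IntervalIntegrable (fun τ => Lf τ * Real.cos (m*τ)) volume 0 (2*Real.pi) :=
    II_Lf.mul_continuousOn (Continuous.continuousOn (cont_cosm (m:ℝ)))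
  have ha : Tendsto F (𝓝[>] (0:ℝ)) (𝓝 0) := by
    have hpart1 := (KL0 m).const_mul (1/(m:ℝ))
    have hpart2 : Tendsto (fun τ : ℝ => (1/(m:ℝ)) * (τ + Real.sin (m*τ)/m
        + 2*∑ k ∈ Finset.Icc 1 (m-1), Real.sin (k*τ)/k)) (𝓝[>] (0:ℝ)) (𝓝 0) := by
      have hc : Continuous (fun τ : ℝ => (1/(m:ℝ)) * (τ + Real.sin (m*τ)/m
          + 2*∑ k ∈ Finset.Icc 1 (m-1), Real.sin (k*τ)/k)) := by
        apply Continuous.mul continuous_const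
        apply Continuous.add (Continuous.add continuous_id ((cont_sinm (m:ℝ)).div_const _))
        apply Continuous.mul continuous_const
        exact continuous_finset_sum _ (fun k _ => (cont_sinm (k:ℝ)).div_const _)
      have := (hc.tendsto 0).mono_left (nhdsWithin_le_nhds (s := Ioi (0:ℝ)))
      simpa using this
    have := (hpart1.sub hpart2)
    simpa [hF] using this
  have hb : Tendsto F (𝓝[<] (2*Real.pi)) (𝓝 (-2*Real.pi/m)) := by
    have hpart1 := (KL2pi m).const_mul (1/(m:ℝ))
    have hsin2pi : ∀ k : ℕ, Real.sin ((k:ℝ) * (2*Real.pi)) = 0 := by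
      intro k
      simpa using Real.sin_add_nat_mul_two_pi 0 k
    have hval : (1/(m:ℝ)) * ((2*Real.pi) + Real.sin (m*(2*Real.pi))/m
        + 2*∑ k ∈ Finset.Icc 1 (m-1), Real.sin (k*(2*Real.pi))/k) = 2*Real.pi/m := by
      rw [hsin2pi m]
      rw [Finset.sum_congr rfl (fun k _ => by rw [hsin2pi k])]
      simp
      ring
    have hpart2 : Tendsto (fun τ : ℝ => (1/(m:ℝ)) * (τ + Real.sin (m*τ)/m
        + 2*∑ k ∈ Finset.Icc 1 (m-1), Real.sin (k*τ)/k)) (𝓝[<] (2*Real.pi)) (𝓝 (2*Real.pi/m)) := by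
      have hc : Continuous (fun τ : ℝ => (1/(m:ℝ)) * (τ + Real.sin (m*τ)/m
          + 2*∑ k ∈ Finset.Icc 1 (m-1), Real.sin (k*τ)/k)) := by
        apply Continuous.mul continuous_const
        apply Continuous.add (Continuous.add continuous_id ((cont_sinm (m:ℝ)).div_const _))
        apply Continuous.mul continuous_const
        exact continuous_finset_sum _ (fun k _ => (cont_sinm (k:ℝ)).div_const _)
      have := (hc.tendsto (2*Real.pi)).mono_left (nhdsWithin_le_nhds (s := Iio (2*Real.pi)))
      rw [hval] at this
      exact this
    have hcomb := hpart1.sub hpart2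
    have : (1/(m:ℝ)) * 0 - 2*Real.pi/m = -2*Real.pi/m := by ring
    rw [this] at hcomb
    exact hcomb
  have := integral_eq_sub_of_hasDerivAt_of_tendsto (by positivity) hderiv hint ha hb
  rw [this]
  ring

lemma II_Lf_pi2 : IntervalIntegrable Lf volume Real.pi (2*Real.pi) := by
  have h := II_Lf_pi.comp_sub_left (2*Real.pi)
  simp only [sub_zero] at h
  have h2 : (fun x => Lf (2*Real.pi - x)) = Lf := funext Lf_symm
  rw [h2, show 2*Real.pi - Real.pi = Real.pi by ring] at h
  exact h.symm

lemma Jsin (m : ℕ) : ∫ τ in (0:ℝ)..(2*Real.pi), Lf τ * Real.sin (m*τ) = 0 := by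
  have key : ∀ x : ℝ, Lf (2*Real.pi - x) * Real.sin ((m:ℝ)*(2*Real.pi - x))
      = -(Lf x * Real.sin ((m:ℝ)*x)) := by
    intro x
    rw [Lf_symm, show (m:ℝ)*(2*Real.pi - x) = (m:ℝ)*(2*Real.pi) - (m:ℝ)*x by ring,
      Real.sin_nat_mul_two_pi_sub]
    ring
  have h := integral_comp_sub_left (a := (0:ℝ)) (b := 2*Real.pi)
    (fun τ => Lf τ * Real.sin ((m:ℝ)*τ)) (2*Real.pi)
  simp only [key, sub_zero, sub_self] at h
  rw [intervalIntegral.integral_neg] at h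
  linarith [h]

lemma Azero : ∫ τ in (0:ℝ)..(2*Real.pi), Lf τ = 0 := by
  have hpi := Real.pi_pos
  have IIshift : IntervalIntegrable (fun τ => Lf (τ + Real.pi)) volume 0 Real.pi := by
    have h := II_Lf_pi2.comp_add_right Real.pi
    rw [show Real.pi - Real.pi = (0:ℝ) by ring, show 2*Real.pi - Real.pi = Real.pi by ring] at h
    exact h
  have hsplit : ∫ τ in (0:ℝ)..(2*Real.pi), Lf τ
      = (∫ τ in (0:ℝ)..Real.pi, Lf τ) + ∫ τ in Real.pi..(2*Real.pi), Lf τ :=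
    (integral_add_adjacent_intervals II_Lf_pi II_Lf_pi2).symm
  have hshift : ∫ τ in Real.pi..(2*Real.pi), Lf τ = ∫ τ in (0:ℝ)..Real.pi, Lf (τ + Real.pi) := by
    have h := integral_comp_add_right (a := (0:ℝ)) (b := Real.pi) Lf Real.pi
    rw [zero_add, show Real.pi + Real.pi = 2*Real.pi by ring] at h
    exact h.symm
  have hsum : (∫ τ in (0:ℝ)..Real.pi, Lf τ) + ∫ τ in (0:ℝ)..Real.pi, Lf (τ + Real.pi)
      = ∫ τ in (0:ℝ)..Real.pi, (Lf τ + Lf (τ + Real.pi)) :=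
    (integral_add II_Lf_pi IIshift).symm
  have hcongr : ∫ τ in (0:ℝ)..Real.pi, (Lf τ + Lf (τ + Real.pi))
      = ∫ τ in (0:ℝ)..Real.pi, Lf (2*τ) := by
    apply intervalIntegral.integral_congr_ae
    have hane : ∀ᵐ x : ℝ, x ≠ Real.pi := by
      rw [MeasureTheory.ae_iff]
      convert Real.volume_singleton (a := Real.pi) using 2
      ext x; simp
    filter_upwards [hane] with τ hτ hmem
    rw [uIoc_of_le hpi.le, mem_Ioc] at hmem
    have hs : 0 < Real.sin (τ/2) :=
      Real.sin_pos_of_pos_of_lt_pi (by linarith [hmem.1]) (by linarith [hmem.2, hpi])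
    have hc : 0 < Real.cos (τ/2) := by
      apply Real.cos_pos_of_mem_Ioo
      constructor
      · linarith [hmem.1, hpi]
      · cases lt_or_eq_of_le hmem.2 with
        | inl h => linarith
        | inr h => exact absurd h hτ
    have h1 : Real.sin ((τ + Real.pi)/2) = Real.cos (τ/2) := by
      rw [show (τ + Real.pi)/2 = τ/2 + Real.pi/2 by ring, Real.sin_add_pi_div_two]
    unfold Lf
    rw [h1, ← Real.log_mul (by positivity) (by positivity)]
    congr 1
    rw [show 2*τ/2 = τ by ring, show Real.sin τ = Real.sin (2*(τ/2)) by rw [show 2*(τ/2) = τ by ring],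
      Real.sin_two_mul]
    ring
  have hscale : ∫ τ in (0:ℝ)..Real.pi, Lf (2*τ) = 2⁻¹ * ∫ τ in (0:ℝ)..(2*Real.pi), Lf τ := by
    have h := integral_comp_mul_left (a := (0:ℝ)) (b := Real.pi) Lf (c := 2) (by norm_num)
    rw [mul_zero] at h
    rw [h]
    simp [smul_eq_mul]
  have := hsplit
  rw [hshift] at this
  rw [hsum, hcongr, hscale] at this
  linarith [this]

lemma Jfull (m : ℕ) (hm : 1 ≤ m) (c : ℝ) :
    ∫ τ in (0:ℝ)..(2*Real.pi), Lf τ * Real.sin ((m:ℝ)*τ + c)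
      = -(2*Real.pi/m) * Real.sin c := by
  have h1 : IntervalIntegrable (fun τ => Lf τ * Real.sin ((m:ℝ)*τ) * Real.cos c)
      volume 0 (2*Real.pi) := by
    apply IntervalIntegrable.mul_const
    exact II_Lf.mul_continuousOn (Continuous.continuousOn
      (Real.continuous_sin.comp (continuous_const.mul continuous_id)))
  have h2 : IntervalIntegrable (fun τ => Lf τ * Real.cos ((m:ℝ)*τ) * Real.sin c)
      volume 0 (2*Real.pi) := by
    apply IntervalIntegrable.mul_const
    exact II_Lf.mul_continuousOn (Continuous.continuousOn
      (Real.continuous_cos.comp (continuous_const.mul continuous_id)))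
  have hexp : ∀ τ : ℝ, Lf τ * Real.sin ((m:ℝ)*τ + c)
      = Lf τ * Real.sin ((m:ℝ)*τ) * Real.cos c + Lf τ * Real.cos ((m:ℝ)*τ) * Real.sin c := by
    intro τ; rw [Real.sin_add]; ring
  rw [integral_congr (g := fun τ => Lf τ * Real.sin ((m:ℝ)*τ) * Real.cos c
      + Lf τ * Real.cos ((m:ℝ)*τ) * Real.sin c) (fun τ _ => hexp τ)]
  rw [integral_add h1 h2, intervalIntegral.integral_mul_const, intervalIntegral.integral_mul_const, Jsin m, Jcos m hm]
  ring

lemma Jall (m : ℕ) (c : ℝ) :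
    ∫ τ in (0:ℝ)..(2*Real.pi), Lf τ * Real.sin ((m:ℝ)*τ + c)
      = -(2*Real.pi/m) * Real.sin c := by
  rcases Nat.eq_zero_or_pos m with h | h
  · subst h
    simp only [Nat.cast_zero, zero_mul, zero_add, div_zero, neg_zero, zero_mul]
    rw [intervalIntegral.integral_mul_const, Azero, zero_mul]
  · exact Jfull m h c

lemma prod_id (r θ τ : ℝ) : Real.sin τ * Real.cos (r*(θ - τ))
    = 2⁻¹ * Real.sin ((r+1)*τ + -(r*θ)) - 2⁻¹ * Real.sin ((r-1)*τ + -(r*θ)) := by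
  rw [show (r+1)*τ + -(r*θ) = (r*τ - r*θ) + τ by ring,
    show (r-1)*τ + -(r*θ) = (r*τ - r*θ) + -τ by ring,
    show r*(θ - τ) = -(r*τ - r*θ) by ring,
    Real.sin_add (r*τ - r*θ) τ, Real.sin_add (r*τ - r*θ) (-τ), Real.cos_neg, Real.sin_neg,
    Real.cos_neg]
  ring

lemma II_mul_sin (m c : ℝ) :
    IntervalIntegrable (fun τ => Lf τ * Real.sin (m*τ + c)) volume 0 (2*Real.pi) :=
  II_Lf.mul_continuousOn (Continuous.continuousOn (by fun_prop))

lemma II_term (r θ : ℝ) :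
    IntervalIntegrable (fun τ => Lf τ * (Real.sin τ * Real.cos (r*(θ - τ)))) volume 0 (2*Real.pi) :=
  II_Lf.mul_continuousOn (Continuous.continuousOn (by fun_prop))

lemma Tk (k : ℕ) (hk : 1 ≤ k) (θ : ℝ) :
    ∫ τ in (0:ℝ)..(2*Real.pi), Lf τ * (Real.sin τ * Real.cos ((k:ℝ)*(θ - τ)))
      = Real.pi * Real.sin ((k:ℝ)*θ) * (1/((k:ℝ)+1) - 1/((k:ℝ)-1)) := by
  have hcast1 : ((k+1:ℕ):ℝ) = (k:ℝ)+1 := by push_cast; ring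
  have hcast2 : ((k-1:ℕ):ℝ) = (k:ℝ)-1 := by
    rw [Nat.cast_sub hk, Nat.cast_one]
  have hcongr : ∀ τ ∈ uIcc (0:ℝ) (2*Real.pi),
      Lf τ * (Real.sin τ * Real.cos ((k:ℝ)*(θ - τ)))
        = 2⁻¹ * (Lf τ * Real.sin (((k+1:ℕ):ℝ)*τ + -((k:ℝ)*θ)))
          - 2⁻¹ * (Lf τ * Real.sin (((k-1:ℕ):ℝ)*τ + -((k:ℝ)*θ))) := by
    intro τ _
    rw [hcast1, hcast2, prod_id (k:ℝ) θ τ]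
    ring
  rw [integral_congr hcongr,
    integral_sub ((II_mul_sin _ _).const_mul 2⁻¹) ((II_mul_sin _ _).const_mul 2⁻¹),
    intervalIntegral.integral_const_mul, intervalIntegral.integral_const_mul, Jall (k+1) _, Jall (k-1) _,
    hcast1, hcast2, Real.sin_neg]
  ring

theorem stmt10 (n : ℕ) (hn : 2 ≤ n) (j : ℕ) (hj : j < 2 * n) (t : ℝ) :
    ∫ ζ in (0:ℝ)..(2 * Real.pi),
        Real.log (4 * Real.sin ((t - ζ) / 2) ^ 2) * Real.sin (t - ζ) * lagrangeBasis n j ζ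
      = Vweight n j t := by
  have hpi := Real.pi_pos
  set θ : ℝ := t - zetaPt n j with hθ
  set f : ℝ → ℝ := fun τ => Lf τ * Real.sin τ * lagrangeBasis n j (t - τ) with hf
  -- step 1 : change of variables
  have step1 : ∫ ζ in (0:ℝ)..(2*Real.pi),
      Real.log (4 * Real.sin ((t - ζ) / 2) ^ 2) * Real.sin (t - ζ) * lagrangeBasis n j ζ
      = ∫ x in (t - 2*Real.pi)..t, f x := by
    have h := integral_comp_sub_left (a := (0:ℝ)) (b := 2*Real.pi) f t
    rw [sub_zero] at h
    rw [← h]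
    apply integral_congr
    intro ζ _
    simp only [hf, Lf]
    rw [show t - (t - ζ) = ζ by ring]
  -- step 2 : periodicity
  have hlag : ∀ x : ℝ, lagrangeBasis n j (x + 2*Real.pi) = lagrangeBasis n j x := by
    intro x
    unfold lagrangeBasis
    have h1 : ∀ k : ℕ, Real.cos ((k:ℝ) * (x + 2*Real.pi - zetaPt n j))
        = Real.cos ((k:ℝ) * (x - zetaPt n j)) := by
      intro k
      rw [show (k:ℝ) * (x + 2*Real.pi - zetaPt n j)
          = (k:ℝ) * (x - zetaPt n j) + (k:ℝ)*(2*Real.pi) by ring]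
      exact Real.cos_add_nat_mul_two_pi _ k
    have hs : ∑ k ∈ Finset.Icc 1 (n-1), Real.cos ((k:ℝ) * (x + 2*Real.pi - zetaPt n j))
        = ∑ k ∈ Finset.Icc 1 (n-1), Real.cos ((k:ℝ) * (x - zetaPt n j)) :=
      Finset.sum_congr rfl (fun k _ => h1 k)
    rw [hs, h1 n]
  have hlag2 : ∀ x : ℝ, lagrangeBasis n j (x - 2*Real.pi) = lagrangeBasis n j x := by
    intro x
    conv_rhs => rw [show x = (x - 2*Real.pi) + 2*Real.pi by ring]
    rw [hlag]
  have hper : Function.Periodic f (2*Real.pi) := by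
    intro x
    simp only [hf]
    rw [Lf_periodic x, Real.sin_add_two_pi x,
      show t - (x + 2*Real.pi) = t - x - 2*Real.pi by ring, hlag2]
  have step2 : ∫ x in (t - 2*Real.pi)..t, f x = ∫ x in (0:ℝ)..(2*Real.pi), f x := by
    have h := hper.intervalIntegral_add_eq (t - 2*Real.pi) 0
    rw [show t - 2*Real.pi + 2*Real.pi = t by ring, zero_add] at h
    exact h
  -- step 3 : expansion
  have hn1 : (1:ℕ) ≤ n := by omega
  have hnR : (2:ℝ) ≤ (n:ℝ) := by exact_mod_cast hn
  have IA : IntervalIntegrable (fun τ => Lf τ * Real.sin τ) volume 0 (2*Real.pi) :=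
    II_Lf.mul_continuousOn Real.continuous_sin.continuousOn
  have contB : Continuous (fun τ : ℝ => 2*∑ k ∈ Finset.Icc 1 (n-1),
      Real.sin τ * Real.cos ((k:ℝ)*(θ - τ))) := by
    apply continuous_const.mul
    apply continuous_finset_sum
    intro k _
    exact Real.continuous_sin.mul (by fun_prop)
  have IB : IntervalIntegrable (fun τ => Lf τ * (2*∑ k ∈ Finset.Icc 1 (n-1),
      Real.sin τ * Real.cos ((k:ℝ)*(θ - τ)))) volume 0 (2*Real.pi) :=
    II_Lf.mul_continuousOn contB.continuousOn
  have IC : IntervalIntegrable (fun τ => Lf τ * (Real.sin τ * Real.cos ((n:ℝ)*(θ - τ))))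
      volume 0 (2*Real.pi) := II_term (n:ℝ) θ
  have hpoint : ∀ τ ∈ uIcc (0:ℝ) (2*Real.pi), f τ = (1/(2*(n:ℝ))) *
      ((Lf τ * Real.sin τ)
        + Lf τ * (2*∑ k ∈ Finset.Icc 1 (n-1), Real.sin τ * Real.cos ((k:ℝ)*(θ - τ)))
        + Lf τ * (Real.sin τ * Real.cos ((n:ℝ)*(θ - τ)))) := by
    intro τ _
    simp only [hf]
    unfold lagrangeBasis
    have harg : ∀ k : ℕ, Real.cos ((k:ℝ) * (t - τ - zetaPt n j))
        = Real.cos ((k:ℝ) * (θ - τ)) := by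
      intro k
      rw [show (k:ℝ) * (t - τ - zetaPt n j) = (k:ℝ) * (θ - τ) by rw [hθ]; ring]
    rw [Finset.sum_congr rfl (fun k _ => harg k), harg n, ← Finset.mul_sum]
    ring
  have step3 : ∫ x in (0:ℝ)..(2*Real.pi), f x = (1/(2*(n:ℝ))) *
      ((∫ τ in (0:ℝ)..(2*Real.pi), Lf τ * Real.sin τ)
        + (∫ τ in (0:ℝ)..(2*Real.pi), Lf τ * (2*∑ k ∈ Finset.Icc 1 (n-1),
            Real.sin τ * Real.cos ((k:ℝ)*(θ - τ))))
        + ∫ τ in (0:ℝ)..(2*Real.pi), Lf τ * (Real.sin τ * Real.cos ((n:ℝ)*(θ - τ)))) := by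
    rw [integral_congr hpoint, intervalIntegral.integral_const_mul, integral_add (IA.add IB) IC,
      integral_add IA IB]
  have hA : ∫ τ in (0:ℝ)..(2*Real.pi), Lf τ * Real.sin τ = 0 := by
    have := Jsin 1
    simpa using this
  have hB : ∫ τ in (0:ℝ)..(2*Real.pi), Lf τ * (2*∑ k ∈ Finset.Icc 1 (n-1),
      Real.sin τ * Real.cos ((k:ℝ)*(θ - τ)))
      = ∑ k ∈ Finset.Icc 1 (n-1),
          2 * (Real.pi * Real.sin ((k:ℝ)*θ) * (1/((k:ℝ)+1) - 1/((k:ℝ)-1))) := by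
    have hpt : ∀ τ ∈ uIcc (0:ℝ) (2*Real.pi), Lf τ * (2*∑ k ∈ Finset.Icc 1 (n-1),
        Real.sin τ * Real.cos ((k:ℝ)*(θ - τ)))
        = ∑ k ∈ Finset.Icc 1 (n-1), 2 * (Lf τ * (Real.sin τ * Real.cos ((k:ℝ)*(θ - τ)))) := by
      intro τ _
      rw [Finset.mul_sum, Finset.mul_sum]
      exact Finset.sum_congr rfl (fun k _ => by ring)
    calc ∫ τ in (0:ℝ)..(2*Real.pi), Lf τ * (2*∑ k ∈ Finset.Icc 1 (n-1),
          Real.sin τ * Real.cos ((k:ℝ)*(θ - τ)))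
        = ∫ τ in (0:ℝ)..(2*Real.pi), ∑ k ∈ Finset.Icc 1 (n-1),
            2 * (Lf τ * (Real.sin τ * Real.cos ((k:ℝ)*(θ - τ)))) := integral_congr hpt
      _ = ∑ k ∈ Finset.Icc 1 (n-1), ∫ τ in (0:ℝ)..(2*Real.pi),
            2 * (Lf τ * (Real.sin τ * Real.cos ((k:ℝ)*(θ - τ)))) :=
          intervalIntegral.integral_finset_sum (fun k _ => (II_term (k:ℝ) θ).const_mul 2)
      _ = ∑ k ∈ Finset.Icc 1 (n-1),
            2 * (Real.pi * Real.sin ((k:ℝ)*θ) * (1/((k:ℝ)+1) - 1/((k:ℝ)-1))) := by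
          apply Finset.sum_congr rfl
          intro k hk
          rw [intervalIntegral.integral_const_mul, Tk k (Finset.mem_Icc.mp hk).1 θ]
  have hC : ∫ τ in (0:ℝ)..(2*Real.pi), Lf τ * (Real.sin τ * Real.cos ((n:ℝ)*(θ - τ)))
      = Real.pi * Real.sin ((n:ℝ)*θ) * (1/((n:ℝ)+1) - 1/((n:ℝ)-1)) := Tk n hn1 θ
  -- sum split
  have hins : Finset.Icc 1 (n-1) = insert 1 (Finset.Icc 2 (n-1)) := by
    ext x
    simp only [Finset.mem_Icc, Finset.mem_insert]
    omega
  have hnotmem : (1:ℕ) ∉ Finset.Icc 2 (n-1) := by simp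
  have hsum2 : ∑ k ∈ Finset.Icc 2 (n-1),
      2 * (Real.pi * Real.sin ((k:ℝ)*θ) * (1/((k:ℝ)+1) - 1/((k:ℝ)-1)))
      = (-4*Real.pi) * ∑ k ∈ Finset.Icc 2 (n-1), Real.sin ((k:ℝ)*θ) / ((k:ℝ)^2 - 1) := by
    rw [Finset.mul_sum]
    apply Finset.sum_congr rfl
    intro k hk
    have hk2 : (2:ℝ) ≤ (k:ℝ) := by exact_mod_cast (Finset.mem_Icc.mp hk).1
    have h1 : (k:ℝ) + 1 ≠ 0 := by linarith
    have h2 : (k:ℝ) - 1 ≠ 0 := by linarith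
    have h3 : (k:ℝ)^2 - 1 ≠ 0 := by nlinarith
    field_simp
    ring
  have hBval : ∑ k ∈ Finset.Icc 1 (n-1),
      2 * (Real.pi * Real.sin ((k:ℝ)*θ) * (1/((k:ℝ)+1) - 1/((k:ℝ)-1)))
      = Real.pi * Real.sin θ
        + (-4*Real.pi) * ∑ k ∈ Finset.Icc 2 (n-1), Real.sin ((k:ℝ)*θ) / ((k:ℝ)^2 - 1) := by
    rw [hins, Finset.sum_insert hnotmem, hsum2]
    norm_num
    ring
  -- Vweight rewriting
  have hz : zetaPt n j - t = -θ := by rw [hθ]; ring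
  have hVs : ∀ m : ℕ, Real.sin ((m:ℝ) * (zetaPt n j - t)) = -Real.sin ((m:ℝ)*θ) := by
    intro m
    rw [hz, mul_neg, Real.sin_neg]
  have hV : Vweight n j t = (Real.pi / (2*(n:ℝ))) * Real.sin θ
      - (2*Real.pi/(n:ℝ)) * ∑ k ∈ Finset.Icc 2 (n-1), Real.sin ((k:ℝ)*θ) / ((k:ℝ)^2 - 1)
      - (Real.pi / ((n:ℝ)*((n:ℝ)^2 - 1))) * Real.sin ((n:ℝ)*θ) := by
    unfold Vweight
    rw [Finset.sum_congr rfl (fun m _ => by rw [hVs m]), hVs n, hz, Real.sin_neg]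
    have hnegsum : ∑ k ∈ Finset.Icc 2 (n-1), -Real.sin ((k:ℝ)*θ) / ((k:ℝ)^2 - 1)
        = -∑ k ∈ Finset.Icc 2 (n-1), Real.sin ((k:ℝ)*θ) / ((k:ℝ)^2 - 1) := by
      rw [← Finset.sum_neg_distrib]
      exact Finset.sum_congr rfl (fun k _ => by rw [neg_div])
    rw [hnegsum]
    ring
  -- final
  rw [step1, step2, step3, hA, hB, hC, hBval, hV]
  have h1 : (n:ℝ) ≠ 0 := by linarith
  have h2 : (n:ℝ) + 1 ≠ 0 := by linarith
  have h3 : (n:ℝ) - 1 ≠ 0 := by linarith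
  have h4 : (n:ℝ)^2 - 1 ≠ 0 := by nlinarith
  set S := ∑ k ∈ Finset.Icc 2 (n-1), Real.sin ((k:ℝ)*θ) / ((k:ℝ)^2 - 1) with hS
  field_simp
  ring
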